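/- For all positive integers k and m (no restriction relating m and k), every polynomial P ∈ 𝒫 can be written as a finite sum P = Σ_n r^{2n} H_n over families n = (n_ij)_{1 ≤ i ≤ j ≤ k} of nonnegative integers, with each H_n a spherical harmonic; i.e. 𝒫 = Σ_n r^{2n} ℋ (Lemma 1(ii); the sum need not be direct in general). -/

import Mathlib

/-!
Equip polynomials with the Fischer form `⟨p, q⟩ = Σ_α α! p_α q_α`, for which multiplication by
`x_v` is adjoint to `∂_v`. Hence multiplication by `r²_ij` is adjoint to `Δ_ij`, and
`⟨conj p, p⟩ = Σ_α α! |p_α|²` vanishes only for `p = 0`.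

Let `S` be a subspace that contains the spherical harmonics, is stable under multiplication by
every `r²_ij`, and contains all polynomials of degree `≤ d`. If `y` of degree `≤ d + 1` is
orthogonal to `S`, pairing it with `r²_ij · conj (Δ_ij y) ∈ S` gives
`⟨conj (Δ_ij y), Δ_ij y⟩ = 0`, so `y` is harmonic; then `conj y ∈ S` forces `y = 0`. In finite
dimension this means that `S` contains all polynomials of degree `≤ d + 1`. The span of the
`r^{2n} H` is such an `S`.
-/

open MvPolynomial

/-- The mixed Laplacian `Δ_ij = Σ_s ∂_{x^i_s} ∂_{x^j_s}` on polynomials in `k` vector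
variables of `ℝ^m`. -/
noncomputable def mixedLap (k m : ℕ) (i j : Fin k)
    (P : MvPolynomial (Fin k × Fin m) ℂ) : MvPolynomial (Fin k × Fin m) ℂ :=
  ∑ s : Fin m, pderiv (i, s) (pderiv (j, s) P)

/-- The polynomial `r²_ij = Σ_s x^i_s x^j_s`. -/
noncomputable def r2 (k m : ℕ) (i j : Fin k) : MvPolynomial (Fin k × Fin m) ℂ :=
  ∑ s : Fin m, X (i, s) * X (j, s)

/-- `H` is a spherical harmonic if `Δ_ij H = 0` for all `i ≤ j`. -/
def IsSphericalHarmonic (k m : ℕ) (H : MvPolynomial (Fin k × Fin m) ℂ) : Prop :=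
  ∀ i j : Fin k, i ≤ j → mixedLap k m i j H = 0

/-- For a family `n = (n_ij)_{i ≤ j}` of nonnegative integers, the polynomial
`r^{2n} = ∏_{i ≤ j} (r²_ij)^{n_ij}`. -/
noncomputable def r2pow (k m : ℕ) (n : {p : Fin k × Fin k // p.1 ≤ p.2} → ℕ) :
    MvPolynomial (Fin k × Fin m) ℂ :=
  ∏ p : {p : Fin k × Fin k // p.1 ≤ p.2}, (r2 k m p.1.1 p.1.2) ^ (n p)

namespace MvPolynomial

variable {σ R : Type*} [CommSemiring R]

def multiIndexFactorial (α : σ →₀ ℕ) : ℕ := α.prod fun _ e => e.factorial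

theorem multiIndexFactorial_add_single [DecidableEq σ] (α : σ →₀ ℕ) (v : σ) :
    multiIndexFactorial (α + Finsupp.single v 1) = (α v + 1) * multiIndexFactorial α := by
  unfold multiIndexFactorial
  rw [← Finsupp.mul_prod_erase' _ v _ (fun _ => rfl),
    ← Finsupp.mul_prod_erase' α v _ (fun _ => rfl)]
  simp [Finsupp.erase_add, Nat.factorial_succ, mul_assoc]

theorem multiIndexFactorial_pos (α : σ →₀ ℕ) : 0 < multiIndexFactorial α :=
  Finset.prod_pos fun _ _ => Nat.factorial_pos _

noncomputable def fischerForm : LinearMap.BilinForm R (MvPolynomial σ R) :=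
  LinearMap.mk₂ R
    (fun p q => (AddMonoidAlgebra.coeff p).sum fun α c =>
      (multiIndexFactorial α : R) * c * coeff α q)
    (fun p p' q => by
      rw [AddMonoidAlgebra.coeff_add]
      exact Finsupp.sum_add_index' (by simp) (by intros; ring))
    (fun c p q => by
      rw [AddMonoidAlgebra.coeff_smul, Finsupp.sum_smul_index' (by simp), Finsupp.smul_sum]
      simp [mul_assoc, mul_left_comm])
    (fun p q q' => by simp [mul_add, Finsupp.sum_add])
    (fun c p q => by
      simp only [coeff_smul, smul_eq_mul, Finsupp.mul_sum]
      exact Finsupp.sum_congr fun _ _ => by ring)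

theorem fischerForm_monomial (α : σ →₀ ℕ) (c : R) (q : MvPolynomial σ R) :
    fischerForm (monomial α c) q = multiIndexFactorial α * c * coeff α q := by
  simp only [fischerForm, LinearMap.mk₂_apply]
  exact sum_monomial_eq (by simp)

theorem fischerForm_apply (p q : MvPolynomial σ R) :
    fischerForm p q = ∑ α ∈ p.support, (multiIndexFactorial α : R) * coeff α p * coeff α q :=
  rfl

theorem fischerForm_X_mul (v : σ) (p q : MvPolynomial σ R) :
    fischerForm (X v * p) q = fischerForm p (pderiv v q) := by
  classical
  induction p using MvPolynomial.induction_on' with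
  | monomial β c =>
    rw [X, monomial_mul, one_mul, add_comm, fischerForm_monomial, fischerForm_monomial,
      coeff_pderiv, multiIndexFactorial_add_single]
    push_cast
    ring
  | add p p' hp hp' =>
    rw [mul_add, map_add, map_add, LinearMap.add_apply, LinearMap.add_apply, hp, hp']

theorem eq_zero_of_fischerForm_map_conj_self {𝕜 : Type*} [RCLike 𝕜] {p : MvPolynomial σ 𝕜}
    (h : fischerForm (map (starRingEnd 𝕜) p) p = 0) : p = 0 := by
  have hre : ∑ α ∈ p.support, (multiIndexFactorial α : ℝ) * ‖coeff α p‖ ^ 2 = 0 := by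
    rw [fischerForm_apply, support_map_of_injective _ (starRingEnd 𝕜).injective] at h
    simp only [coeff_map, mul_assoc, RCLike.conj_mul] at h
    exact_mod_cast h
  ext α
  by_contra hα
  have := (Finset.sum_eq_zero_iff_of_nonneg (fun _ _ => by positivity)).mp hre α
    (mem_support_iff.mpr hα)
  have := multiIndexFactorial_pos α
  simp_all

theorem totalDegree_pderiv_lt {v : σ} {p : MvPolynomial σ R} (h : pderiv v p ≠ 0) :
    (pderiv v p).totalDegree < p.totalDegree := by
  classical
  obtain ⟨α, hα, hdeg⟩ := Finset.exists_mem_eq_sup _ (support_nonempty.mpr h)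
    fun s => s.sum fun _ e => e
  have hα' : α + Finsupp.single v 1 ∈ p.support := by
    rw [mem_support_iff, coeff_pderiv] at hα
    exact mem_support_iff.mpr (left_ne_zero_of_mul hα)
  have := le_totalDegree hα'
  rw [Finsupp.sum_add_index' (fun _ => rfl) (fun _ _ _ => rfl), Finsupp.sum_single_index rfl]
    at this
  rw [totalDegree, hdeg]
  omega

theorem totalDegree_mul_pderiv_le (q : MvPolynomial σ R) (v : σ) (p : MvPolynomial σ R) :
    (q * pderiv v p).totalDegree ≤ q.totalDegree + p.totalDegree - 1 := by
  by_cases h : pderiv v p = 0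
  · simp [h]
  · have := totalDegree_pderiv_lt h
    have := totalDegree_mul q (pderiv v p)
    omega

end MvPolynomial

namespace LinearMap.BilinForm
variable {K V : Type*} [Field K] [AddCommGroup V] [Module K V] [FiniteDimensional K V]

theorem eq_top_of_orthogonal_eq_bot {B : LinearMap.BilinForm K V} {W : Submodule K V}
    (h : B.orthogonal W = ⊥) : W = ⊤ := by
  have := B.finrank_add_finrank_orthogonal' W
  rw [h, finrank_bot, add_zero] at this
  exact Submodule.eq_top_of_finrank_eq (le_antisymm (Submodule.finrank_le W) (this ▸ le_self_add))

end LinearMap.BilinForm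

section SphericalHarmonics
variable {k m : ℕ}

theorem mixedLap_add (i j : Fin k) (p q : MvPolynomial (Fin k × Fin m) ℂ) :
    mixedLap k m i j (p + q) = mixedLap k m i j p + mixedLap k m i j q := by
  simp [mixedLap, Finset.sum_add_distrib]

theorem mixedLap_smul (i j : Fin k) (c : ℂ) (p : MvPolynomial (Fin k × Fin m) ℂ) :
    mixedLap k m i j (c • p) = c • mixedLap k m i j p := by
  simp [mixedLap, Finset.smul_sum]

theorem mixedLap_C (i j : Fin k) (c : ℂ) : mixedLap k m i j (C c) = 0 := by
  simp [mixedLap]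

theorem mixedLap_map (f : ℂ →+* ℂ) (i j : Fin k) (p : MvPolynomial (Fin k × Fin m) ℂ) :
    mixedLap k m i j (map f p) = map f (mixedLap k m i j p) := by
  simp [mixedLap, pderiv_map]

theorem fischerForm_r2_mul (i j : Fin k) (p q : MvPolynomial (Fin k × Fin m) ℂ) :
    fischerForm (r2 k m i j * p) q = fischerForm p (mixedLap k m i j q) := by
  simp only [r2, mixedLap, Finset.sum_mul, map_sum, LinearMap.sum_apply]
  refine Finset.sum_congr rfl fun s _ => ?_
  rw [mul_comm (X _), mul_assoc, fischerForm_X_mul, fischerForm_X_mul]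

theorem totalDegree_r2_le (i j : Fin k) : (r2 k m i j).totalDegree ≤ 2 :=
  totalDegree_finsetSum_le fun s _ =>
    (totalDegree_mul _ _).trans (by simp [totalDegree_X])

theorem totalDegree_mul_mixedLap_le (q : MvPolynomial (Fin k × Fin m) ℂ) (i j : Fin k)
    (p : MvPolynomial (Fin k × Fin m) ℂ) :
    (q * mixedLap k m i j p).totalDegree ≤ q.totalDegree + p.totalDegree - 2 := by
  rw [mixedLap, Finset.mul_sum]
  refine totalDegree_finsetSum_le fun s _ => ?_
  by_cases h : pderiv (j, s) p = 0
  · simp [h]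
  have := totalDegree_mul_pderiv_le q (i, s) (pderiv (j, s) p)
  have := totalDegree_pderiv_lt h
  omega

theorem r2pow_zero : r2pow k m 0 = 1 := by
  simp [r2pow]

theorem r2pow_add_single (n : {p : Fin k × Fin k // p.1 ≤ p.2} → ℕ)
    (p : {p : Fin k × Fin k // p.1 ≤ p.2}) :
    r2pow k m (n + Pi.single p 1) = r2 k m p.1.1 p.1.2 * r2pow k m n := by
  classical
  simp only [r2pow, Pi.add_apply, pow_add, Finset.prod_mul_distrib, Pi.single_apply, pow_ite,
    pow_one, pow_zero, Finset.prod_ite_eq', Finset.mem_univ, if_true]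
  ring

def sphericalHarmonics (k m : ℕ) : Submodule ℂ (MvPolynomial (Fin k × Fin m) ℂ) where
  carrier := {H | IsSphericalHarmonic k m H}
  zero_mem' i j _ := by simpa using mixedLap_C (m := m) i j 0
  add_mem' ha hb i j hij := by rw [mixedLap_add, ha i j hij, hb i j hij, add_zero]
  smul_mem' c _ ha i j hij := by rw [mixedLap_smul, ha i j hij, smul_zero]

theorem totalDegree_mixedLap_le (i j : Fin k) (p : MvPolynomial (Fin k × Fin m) ℂ) :
    (mixedLap k m i j p).totalDegree ≤ p.totalDegree - 2 := by
  simpa using totalDegree_mul_mixedLap_le 1 i j p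

theorem restrictTotalDegree_succ_le {S : Submodule ℂ (MvPolynomial (Fin k × Fin m) ℂ)}
    (hH : sphericalHarmonics k m ≤ S)
    (hr2 : ∀ i j : Fin k, i ≤ j → ∀ p ∈ S, r2 k m i j * p ∈ S) {d : ℕ}
    (hd : restrictTotalDegree (Fin k × Fin m) ℂ d ≤ S) :
    restrictTotalDegree (Fin k × Fin m) ℂ (d + 1) ≤ S := by
  set V := restrictTotalDegree (Fin k × Fin m) ℂ (d + 1)
  have hV (p : MvPolynomial (Fin k × Fin m) ℂ) : p ∈ V ↔ p.totalDegree ≤ d + 1 :=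
    mem_restrictTotalDegree _ _ p
  suffices hW : S.comap V.subtype = ⊤ from
    fun p hp => by simpa using hW.ge (Submodule.mem_top (x := ⟨p, hp⟩))
  refine LinearMap.BilinForm.eq_top_of_orthogonal_eq_bot (B := fischerForm.restrict V)
    (eq_bot_iff.mpr fun ⟨y, hyV⟩ hy => ?_)
  have orth (u) (huS : u ∈ S) (huV : u ∈ V) : fischerForm u y = 0 := hy ⟨u, huV⟩ huS
  set ybar := map (starRingEnd ℂ) y
  have hybar : ybar.totalDegree ≤ d + 1 :=
    (totalDegree_le_of_support_subset (support_map_subset _ y)).trans ((hV y).mp hyV)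
  have hΔ (i j : Fin k) (hij : i ≤ j) : mixedLap k m i j y = 0 := by
    apply eq_zero_of_fischerForm_map_conj_self
    rw [← fischerForm_r2_mul, ← mixedLap_map]
    have := totalDegree_mixedLap_le i j ybar
    have := totalDegree_mul_mixedLap_le (r2 k m i j) i j ybar
    have := totalDegree_r2_le (m := m) i j
    refine orth (r2 k m i j * mixedLap k m i j ybar) (hr2 i j hij _ (hd ?_)) ((hV _).mpr ?_)
    · rw [mem_restrictTotalDegree]; omega
    · omega
  have hharm : ybar ∈ sphericalHarmonics k m := fun i j hij => by
    rw [mixedLap_map, hΔ i j hij, map_zero]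
  simpa using eq_zero_of_fischerForm_map_conj_self (orth _ (hH hharm) ((hV _).mpr hybar))

theorem eq_top_of_sphericalHarmonics_le {S : Submodule ℂ (MvPolynomial (Fin k × Fin m) ℂ)}
    (hH : sphericalHarmonics k m ≤ S)
    (hr2 : ∀ i j : Fin k, i ≤ j → ∀ p ∈ S, r2 k m i j * p ∈ S) : S = ⊤ := by
  suffices h : ∀ d, restrictTotalDegree (Fin k × Fin m) ℂ d ≤ S from
    eq_top_iff.mpr fun p _ => h p.totalDegree ((mem_restrictTotalDegree _ _ p).mpr le_rfl)
  intro d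
  induction d with
  | zero =>
    intro p hp
    rw [mem_restrictTotalDegree, Nat.le_zero, totalDegree_eq_zero_iff_eq_C] at hp
    exact hH (hp ▸ fun i j _ => mixedLap_C i j _)
  | succ d ih => exact restrictTotalDegree_succ_le hH hr2 ih

noncomputable def harmonicExpansion (k m : ℕ) :
    (({p : Fin k × Fin k // p.1 ≤ p.2} → ℕ) →₀ sphericalHarmonics k m) →ₗ[ℂ]
      MvPolynomial (Fin k × Fin m) ℂ :=
  Finsupp.lsum ℂ fun n => LinearMap.mulLeft ℂ (r2pow k m n) ∘ₗ (sphericalHarmonics k m).subtype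

theorem harmonicExpansion_apply
    (H : ({p : Fin k × Fin k // p.1 ≤ p.2} → ℕ) →₀ sphericalHarmonics k m) :
    harmonicExpansion k m H = H.sum fun n h => r2pow k m n * h :=
  Finsupp.lsum_apply _ _ H

theorem range_harmonicExpansion : LinearMap.range (harmonicExpansion k m) = ⊤ := by
  refine eq_top_of_sphericalHarmonics_le
    (fun H hH => ⟨Finsupp.single 0 ⟨H, hH⟩, by simp [harmonicExpansion_apply, r2pow_zero]⟩) ?_
  rintro i j hij _ ⟨H, rfl⟩
  refine ⟨H.mapDomain (· + Pi.single ⟨(i, j), hij⟩ 1), ?_⟩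
  rw [harmonicExpansion_apply, harmonicExpansion_apply,
    Finsupp.sum_mapDomain_index (fun _ => by simp) (fun _ _ _ => by simp [mul_add])]
  simp only [Finsupp.sum, Finset.mul_sum, r2pow_add_single, mul_assoc]

end SphericalHarmonics

theorem fischer_existence_general (k m : ℕ)
    (P : MvPolynomial (Fin k × Fin m) ℂ) :
    ∃ H : ({p : Fin k × Fin k // p.1 ≤ p.2} → ℕ) →₀ MvPolynomial (Fin k × Fin m) ℂ,
      (∀ n, IsSphericalHarmonic k m (H n)) ∧
        P = H.sum fun n Hn => r2pow k m n * Hn := by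
  obtain ⟨H, hH⟩ := LinearMap.range_eq_top.mp range_harmonicExpansion P
  refine ⟨H.mapRange Subtype.val rfl, fun n => (H n).2, ?_⟩
  rw [← hH, harmonicExpansion_apply, Finsupp.sum_mapRange_index (fun _ => mul_zero _)]

/-- Lemma 1(ii): for all positive `k, m`, every polynomial is a finite sum
`P = Σ_n r^{2n} H_n` with each `H_n` a spherical harmonic (the sum need not be direct). -/
theorem fischer_existence (k m : ℕ) (hk : 0 < k) (hm : 0 < m)
    (P : MvPolynomial (Fin k × Fin m) ℂ) :
    ∃ H : ({p : Fin k × Fin k // p.1 ≤ p.2} → ℕ) →₀ MvPolynomial (Fin k × Fin m) ℂ,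
      (∀ n, IsSphericalHarmonic k m (H n)) ∧
        P = H.sum fun n Hn => r2pow k m n * Hn :=
  fischer_existence_general k m P
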